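/- arXiv:1012.3892 — 2 statements merged into one kernel-verified Lean document; each statement's English description precedes it below -/
import Mathlib

section
/- Let m be a positive integer and let b_i = m·i for all positive integers i. Then for all positive integers n and k, C^b(n,k) = m^k · binom(n+k-1, 2k-1). -/
open Finset

/-- The number of generalized compositions of `n` with `k` parts, where the part `i`
comes in `b i` types: the sum over all `k`-tuples of positive integers summing to `n`
of the product of the `b`-values of the parts. -/
def genComp (b : ℕ → ℕ) (n k : ℕ) : ℕ :=
  ∑ f ∈ (Finset.Nat.antidiagonalTuple k n).filter (fun f => ∀ j, 0 < f j),
    ∏ j, b (f j)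

/-- The total number of generalized compositions of `n` (with any number of parts). -/
def genCompAll (b : ℕ → ℕ) (n : ℕ) : ℕ :=
  ∑ k ∈ Finset.range (n + 1), genComp b n k

/-!
Subtracting 1 from every part identifies the compositions of `n + k` into `k` positive parts with
the `k`-tuples of naturals summing to `n`, and turns the weight `∏ m * i` into
`m ^ k * ∏ (g j + 1)`. Splitting off the first part, the weighted count of such tuples satisfies
a convolution recurrence with the weights `i + 1`; by the hockey-stick identity, convolving
`(e + n).choose e` with these weights gives `(e + n + 2).choose (e + 2)`, so
`(2k - 1 + n).choose (2k - 1)` solves it.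
-/

theorem Finset.Nat.sum_antidiagonalTuple_succ {M : Type*} [AddCommMonoid M] (k n : ℕ)
    (g : (Fin (k + 1) → ℕ) → M) :
    ∑ f ∈ antidiagonalTuple (k + 1) n, g f =
      ∑ p ∈ antidiagonal n, ∑ t ∈ antidiagonalTuple k p.2, g (Fin.cons p.1 t) := by
  -- `antidiagonalTuple (k + 1) n` is built as a `flatMap` over the value of the first entry.
  change ((List.Nat.antidiagonalTuple (k + 1) n : Multiset _).map g).sum =
    ((List.Nat.antidiagonal n : Multiset (ℕ × ℕ)).map _).sum
  simp only [List.Nat.antidiagonalTuple, List.flatMap, Multiset.map_coe, Multiset.sum_coe,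
    List.map_flatten, List.sum_flatten, List.map_map, Function.comp_def]
  rfl

theorem Finset.sum_antidiagonal_succ_mul_add_choose (e n : ℕ) :
    ∑ ij ∈ antidiagonal n, (ij.1 + 1) * (e + ij.2).choose e = (e + n + 2).choose (e + 2) := by
  induction n with
  | zero => simp
  | succ n ih =>
    have hockey := sum_antidiagonal_choose_add e (n + 1)
    rw [Nat.sum_antidiagonal_succ] at hockey ⊢
    simp only [zero_add, one_mul, add_one_mul (_ + 1), sum_add_distrib, ih] at hockey ⊢
    rw [add_left_comm, hockey, ← add_assoc, add_comm, Nat.choose_succ_succ' (e + n + 2) (e + 1)]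

theorem Finset.Nat.sum_antidiagonalTuple_prod_add_one (k d : ℕ) :
    ∑ g ∈ antidiagonalTuple (k + 1) d, ∏ j, (g j + 1) = (2 * k + 1 + d).choose (2 * k + 1) := by
  induction k generalizing d with
  | zero => simp [add_comm]
  | succ k ih =>
    simp only [sum_antidiagonalTuple_succ, Fin.prod_univ_succ (n := k + 1), Fin.cons_zero,
      Fin.cons_succ, ← mul_sum, ih, sum_antidiagonal_succ_mul_add_choose]
    ring_nf

theorem genComp_eq_zero_of_lt (b : ℕ → ℕ) {n k : ℕ} (h : n < k) : genComp b n k = 0 := by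
  refine sum_eq_zero fun f hf => ?_
  rw [mem_filter, Finset.Nat.mem_antidiagonalTuple] at hf
  have : k ≤ ∑ j, f j := by
    simpa using sum_le_sum (s := univ) (f := fun _ => 1) (g := f) fun j _ => hf.2 j
  omega

theorem genComp_add_eq_sum_antidiagonalTuple (b : ℕ → ℕ) (n k : ℕ) :
    genComp b (n + k) k = ∑ g ∈ Finset.Nat.antidiagonalTuple k n, ∏ j, b (g j + 1) := by
  refine sum_nbij' (fun f j => f j - 1) (fun g j => g j + 1) ?_ ?_ ?_ ?_ ?_
  · intro f hf
    simp only [mem_filter, Finset.Nat.mem_antidiagonalTuple] at hf ⊢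
    rw [sum_tsub_distrib _ fun j _ => hf.2 j, hf.1]
    simp
  · intro g hg
    simp only [mem_filter, Finset.Nat.mem_antidiagonalTuple] at hg ⊢
    simp [sum_add_distrib, hg]
  · intro f hf
    exact funext fun j => Nat.sub_add_cancel ((mem_filter.1 hf).2 j)
  · intro g _
    simp
  · intro f hf
    exact prod_congr rfl fun j _ => by rw [Nat.sub_add_cancel ((mem_filter.1 hf).2 j)]

theorem genComp_linear_general (m : ℕ) (b : ℕ → ℕ) (hb : ∀ i, 1 ≤ i → b i = m * i)
    (n k : ℕ) (hk : 1 ≤ k) :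
    genComp b n k = m ^ k * Nat.choose (n + k - 1) (2 * k - 1) := by
  obtain ⟨k, rfl⟩ : ∃ k', k = k' + 1 := ⟨k - 1, by omega⟩
  rcases lt_or_ge n (k + 1) with hlt | hle
  · rw [genComp_eq_zero_of_lt b hlt, Nat.choose_eq_zero_of_lt (by omega), mul_zero]
  obtain ⟨d, rfl⟩ := Nat.exists_eq_add_of_le' hle
  have hprod (g : Fin (k + 1) → ℕ) : ∏ j, b (g j + 1) = m ^ (k + 1) * ∏ j, (g j + 1) := by
    simp [hb, prod_mul_distrib]
  simp_rw [genComp_add_eq_sum_antidiagonalTuple, hprod, ← mul_sum, Finset.Nat.sum_antidiagonalTuple_prod_add_one]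
  congr 2; omega

theorem genComp_linear (m : ℕ) (hm : 1 ≤ m) (b : ℕ → ℕ) (hb : ∀ i, 1 ≤ i → b i = m * i)
    (n k : ℕ) (hn : 1 ≤ n) (hk : 1 ≤ k) :
    genComp b n k = m ^ k * Nat.choose (n + k - 1) (2 * k - 1) :=
  genComp_linear_general m b hb n k hk
end

section
/- Let b_i = c_{i-1} (the (i-1)-st Catalan number) for all positive integers i. Then for all integers n, k with 1 ≤ k < n, C^b(n,k) = ∑_{i=0}^{k-1} binom(k, i) · B(n-k, k-i), where B(m,j) is the Catalan triangle number. -/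
open Finset

/-- The Catalan triangle number $B(m,j) = (j/m)\binom{2m}{m+j}$ (for $1 \le j \le m$);
it vanishes for $j > m$ since then $\binom{2m}{m+j} = 0$. -/
def catalanTriangle (m j : ℕ) : ℕ := j * Nat.choose (2 * m) (m + j) / m

/-!
The generating function of `b` is `X * C`, where `C = 1 + X * C ^ 2` is the Catalan series, so
`C^b(n, k)` is the coefficient of `X ^ m` in `C ^ k`, with `m = n - k`. The relation
`C ^ (k + 1) = C ^ k + X * C ^ (k + 2)` turns this coefficient into the ballot number
`binom(2m+k-1, m+k-1) - binom(2m+k-1, m+k)`. On the other side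
`B(m, j) = binom(2m-1, m+j-1) - binom(2m-1, m+j)`, and Vandermonde's identity turns
`∑ binom(k, i) B(m, k-i)` into the same difference.
-/

namespace PowerSeries

theorem coeff_pow_eq_sum_antidiagonalTuple {R : Type*} [CommSemiring R] (φ : PowerSeries R)
    (k n : ℕ) :
    coeff n (φ ^ k) = ∑ f ∈ Finset.Nat.antidiagonalTuple k n, ∏ j, coeff (f j) φ := by
  classical
  rw [← Fin.prod_const, coeff_prod, finsuppAntidiag, sum_map,
    ← piAntidiag_univ_fin_eq_antidiagonalTuple]
  exact sum_attach _ fun f : Fin k → ℕ => ∏ i, coeff (f i) φ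

theorem coeff_succ_catalanSeries_pow_succ (m k : ℕ) :
    coeff (m + 1) (catalanSeries ^ (k + 1)) =
      coeff (m + 1) (catalanSeries ^ k) + coeff m (catalanSeries ^ (k + 2)) := by
  have h : catalanSeries ^ (k + 1) = catalanSeries ^ k + X * catalanSeries ^ (k + 2) := by
    calc catalanSeries ^ (k + 1) = catalanSeries ^ k * (catalanSeries ^ 2 * X + 1) := by
          rw [catalanSeries_sq_mul_X_add_one, pow_succ]
      _ = catalanSeries ^ k + X * catalanSeries ^ (k + 2) := by ring
  rw [h, map_add, coeff_succ_X_mul]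

theorem coeff_catalanSeries_pow_add_choose (m k : ℕ) (h : m + k ≠ 0) :
    coeff m (catalanSeries ^ k) + (2 * m + k - 1).choose (m + k) =
      (2 * m + k - 1).choose (m + k - 1) := by
  induction m generalizing k with
  | zero =>
    cases k with
    | zero => simp at h
    | succ k => simp [Nat.choose_succ_self]
  | succ m ihm =>
    induction k with
    | zero => simp [coeff_one, mul_add, ← Nat.choose_symm_half]
    | succ k ihk =>
      have h₁ := ihk (by omega)
      have h₂ := ihm (k + 2) (by omega)
      rw [show 2 * (m + 1) + k - 1 = 2 * m + k + 1 by omega,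
        show m + 1 + k - 1 = m + k by omega, show m + 1 + k = m + k + 1 by omega] at h₁
      rw [show 2 * m + (k + 2) - 1 = 2 * m + k + 1 by omega,
        show m + (k + 2) - 1 = m + k + 1 by omega, show m + (k + 2) = m + k + 1 + 1 by omega] at h₂
      rw [show 2 * (m + 1) + (k + 1) - 1 = 2 * m + k + 1 + 1 by omega,
        show m + 1 + (k + 1) = m + k + 1 + 1 by omega,
        show m + k + 1 + 1 - 1 = m + k + 1 by omega,
        Nat.choose_succ_succ' (2 * m + k + 1) (m + k + 1),
        Nat.choose_succ_succ' (2 * m + k + 1) (m + k), coeff_succ_catalanSeries_pow_succ]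
      omega

end PowerSeries

theorem genComp_eq_coeff_pow (b : ℕ → ℕ) (φ : PowerSeries ℕ) (hφ₀ : PowerSeries.coeff 0 φ = 0)
    (hφ : ∀ i, 1 ≤ i → PowerSeries.coeff i φ = b i) (n k : ℕ) :
    genComp b n k = PowerSeries.coeff n (φ ^ k) := by
  rw [PowerSeries.coeff_pow_eq_sum_antidiagonalTuple, genComp, sum_filter]
  refine sum_congr rfl fun f _ => ?_
  split_ifs with hpos
  · exact prod_congr rfl fun j _ => (hφ _ (hpos j)).symm
  · obtain ⟨j, hj⟩ := not_forall.mp hpos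
    exact (prod_eq_zero (mem_univ j) (by rwa [Nat.eq_zero_of_not_pos hj])).symm

theorem Nat.sum_range_choose_mul_choose_add_sub (N r k : ℕ) :
    ∑ i ∈ range (k + 1), k.choose i * N.choose (r + (k - i)) = (k + N).choose (k + r) := by
  rw [Nat.add_choose_eq, Nat.sum_antidiagonal_eq_sum_range_succ (fun a b => k.choose a * N.choose b)]
  refine (sum_congr rfl fun i hi => ?_).trans
    (sum_subset (range_subset_range.2 (by omega)) fun i _ hi => ?_)
  · rw [mem_range] at hi
    rw [show k + r - i = r + (k - i) by omega]
  · rw [Nat.choose_eq_zero_of_lt (by simpa using hi), zero_mul]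

theorem catalanTriangle_succ_add_choose (m j : ℕ) :
    catalanTriangle (m + 1) j + (2 * m + 1).choose (m + 1 + j) = (2 * m + 1).choose (m + j) := by
  rcases le_or_gt j (m + 1) with hj | hj
  · set A := (2 * m + 1).choose (m + j)
    set B := (2 * m + 1).choose (m + j + 1)
    have hpascal : (2 * (m + 1)).choose (m + 1 + j) = A + B := by
      rw [show 2 * (m + 1) = 2 * m + 1 + 1 by omega, show m + 1 + j = m + j + 1 by omega,
        Nat.choose_succ_succ']
    have hratio : B * (m + j + 1) = A * (m + 1 - j) := by
      rw [Nat.choose_succ_right_eq, show 2 * m + 1 - (m + j) = m + 1 - j by omega]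
    have hBA : B ≤ A := by
      refine Nat.le_of_mul_le_mul_right (c := m + j + 1) ?_ (by omega)
      rw [hratio]
      exact Nat.mul_le_mul_left A (by omega)
    have hdiv : j * (A + B) = (A - B) * (m + 1) := by
      zify [hj, hBA] at hratio ⊢
      linear_combination hratio
    rw [catalanTriangle, hpascal, Nat.div_eq_of_eq_mul_left (by omega) hdiv,
      show m + 1 + j = m + j + 1 by omega, Nat.sub_add_cancel hBA]
  · simp [catalanTriangle, Nat.choose_eq_zero_of_lt (by omega : 2 * (m + 1) < m + 1 + j),
      Nat.choose_eq_zero_of_lt (by omega : 2 * m + 1 < m + 1 + j),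
      Nat.choose_eq_zero_of_lt (by omega : 2 * m + 1 < m + j)]

theorem sum_range_choose_mul_catalanTriangle_add_choose (m k : ℕ) :
    ∑ i ∈ range k, k.choose i * catalanTriangle (m + 1) (k - i) +
      (k + (2 * m + 1)).choose (k + (m + 1)) = (k + (2 * m + 1)).choose (k + m) := by
  have hext : ∑ i ∈ range k, k.choose i * catalanTriangle (m + 1) (k - i) =
      ∑ i ∈ range (k + 1), k.choose i * catalanTriangle (m + 1) (k - i) := by
    simp [sum_range_succ, catalanTriangle]
  rw [hext, ← Nat.sum_range_choose_mul_choose_add_sub, ← Nat.sum_range_choose_mul_choose_add_sub,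
    ← sum_add_distrib]
  exact sum_congr rfl fun i _ => by rw [← mul_add, catalanTriangle_succ_add_choose]

theorem genComp_catalan_shifted_triangle_general (b : ℕ → ℕ)
    (hb : ∀ i, 1 ≤ i → b i = catalan (i - 1))
    (n k : ℕ) (hkn : k < n) :
    genComp b n k =
      ∑ i ∈ Finset.range k, Nat.choose k i * catalanTriangle (n - k) (k - i) := by
  obtain ⟨m, rfl⟩ : ∃ m, n = k + (m + 1) := ⟨n - k - 1, by omega⟩
  have hφ : ∀ i, 1 ≤ i → PowerSeries.coeff i (PowerSeries.X * PowerSeries.catalanSeries) = b i :=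
    fun i hi => by
      obtain ⟨i, rfl⟩ := Nat.exists_eq_add_of_le' hi
      simp [PowerSeries.coeff_succ_X_mul, hb]
  rw [genComp_eq_coeff_pow b _ (by simp) hφ, mul_pow, add_comm, PowerSeries.coeff_X_pow_mul,
    Nat.add_sub_cancel]
  have hballot := PowerSeries.coeff_catalanSeries_pow_add_choose (m + 1) k (by omega)
  rw [show 2 * (m + 1) + k - 1 = k + (2 * m + 1) by omega, show m + 1 + k = k + (m + 1) by omega,
    show k + (m + 1) - 1 = k + m by omega] at hballot
  have htriangle := sum_range_choose_mul_catalanTriangle_add_choose m k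
  omega

theorem genComp_catalan_shifted_triangle (b : ℕ → ℕ)
    (hb : ∀ i, 1 ≤ i → b i = catalan (i - 1))
    (n k : ℕ) (hk : 1 ≤ k) (hkn : k < n) :
    genComp b n k =
      ∑ i ∈ Finset.range k, Nat.choose k i * catalanTriangle (n - k) (k - i) :=
  genComp_catalan_shifted_triangle_general b hb n k hkn
end
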